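/- arXiv:2506.11694 — 4 statements merged into one kernel-verified Lean document; each statement's English description precedes it below -/
import Mathlib

section
/- Let Y and M be real random variables such that for every ν > 0, ℙ[|Y_t − Y − t·M| ≥ ν t] = o(t) as t ↓ 0, where Y_t is another family of random variables, and suppose (Y, M) has joint density f_{Y,M}(y, y') continuous in y and dominated as f_{Y,M}(y,y') ≤ C|g(y')| with ∫|y' g(y')| dy' < ∞. If moreover Y has continuously differentiable CDF with density f_Y, then for every y, lim_{t↓0} (ℙ[Y_t ≤ y] − ℙ[Y ≤ y])/t = −∫ y' f_{Y,M}(y, y') dy' = −f_Y(y)·E[M | Y = y]. -/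
/-!
Off an event of probability `o(t)` (where `Y_t` and `Y + tM` differ by at least `νt`) and one of
probability `O(νt)` (where `Y + tM` is within `νt` of `y`, controlled by the domination of the
density), `{Y_t ≤ y}` and `{Y + tM ≤ y}` coincide. By Fubini, `ℙ[Y ≤ y] - ℙ[Y + tM ≤ y]` is
`∫ v, ∫ u in (y - t v)..y, f u v`. After division by `t` the inner integral tends to `v f(y, v)` by
continuity of `f` in its first variable and is dominated by `C |v g v|`, so dominated convergence
gives the limit.
-/

open Filter Topology MeasureTheory ProbabilityTheory Set
open scoped symmDiff

theorem tendsto_nhds_zero_of_forall_abs_le_add_mul {ι : Type*} {l : Filter ι} {b : ι → ℝ} (K : ℝ)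
    (h : ∀ ν > 0, ∃ e : ι → ℝ, Tendsto e l (𝓝 0) ∧ ∀ᶠ x in l, |b x| ≤ e x + ν * K) :
    Tendsto b l (𝓝 0) := by
  rw [Metric.tendsto_nhds]
  intro ε hε
  set ν := ε / (2 * (|K| + 1))
  have hνK : ν * K < ε / 2 :=
    calc ν * K ≤ ν * |K| := mul_le_mul_of_nonneg_left (le_abs_self K) (by positivity)
      _ < ν * (|K| + 1) := mul_lt_mul_of_pos_left (lt_add_one _) (by positivity)
      _ = ε / 2 := by simp only [ν]; field_simp
  obtain ⟨e, he, hb⟩ := h ν (by positivity)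
  filter_upwards [hb, Metric.tendsto_nhds.1 he (ε / 2) (by positivity)] with x hbx hex
  rw [Real.dist_eq, sub_zero] at hex ⊢
  linarith [le_abs_self (e x)]

section Slices

variable {α β E : Type*} [MeasurableSpace α] [MeasurableSpace β]
  [NormedAddCommGroup E] [NormedSpace ℝ E] {μ : Measure α} {ν : Measure β} [SFinite μ] [SFinite ν]
  {f : α × β → E} {s : Set (α × β)}

theorem integrable_setIntegral_slice (hf : Integrable f (μ.prod ν)) (hs : MeasurableSet s) :
    Integrable (fun y => ∫ x in {x | (x, y) ∈ s}, f (x, y) ∂μ) ν := by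
  refine (hf.indicator hs).integral_prod_right.congr (Eventually.of_forall fun y => ?_)
  dsimp only
  rw [show {x | (x, y) ∈ s} = (fun x => (x, y)) ⁻¹' s from rfl,
    ← integral_indicator (measurable_prodMk_right hs)]
  rfl

theorem setIntegral_prod_eq_integral_setIntegral_slice (hf : Integrable f (μ.prod ν))
    (hs : MeasurableSet s) :
    ∫ p in s, f p ∂(μ.prod ν) = ∫ y, ∫ x in {x | (x, y) ∈ s}, f (x, y) ∂μ ∂ν := by
  rw [← integral_indicator hs, integral_prod_symm _ (hf.indicator hs)]
  congr with y
  rw [show {x | (x, y) ∈ s} = (fun x => (x, y)) ⁻¹' s from rfl,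
    ← integral_indicator (measurable_prodMk_right hs)]
  rfl

end Slices

section Shear

variable {f : ℝ → ℝ → ℝ}

theorem tendsto_intervalIntegral_sub_mul_div {h : ℝ → ℝ} (hh : Continuous h) (y v : ℝ) :
    Tendsto (fun t => (∫ u in (y - t * v)..y, h u) / t) (𝓝[>] 0) (𝓝 (v * h y)) := by
  have hlower : HasDerivAt (fun t : ℝ => y - t * v) (-v) 0 := by
    simpa using ((hasDerivAt_id (0 : ℝ)).mul_const v).const_sub y
  have hderiv : HasDerivAt (fun t => ∫ u in (y - t * v)..y, h u) (v * h y) 0 := by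
    refine ((intervalIntegral.integral_hasDerivAt_left (hh.intervalIntegrable _ y)
      (hh.stronglyMeasurableAtFilter _ _) hh.continuousAt).comp (0 : ℝ) hlower).congr_deriv ?_
    simp [mul_comm]
  refine hderiv.tendsto_slope_zero_right.congr fun t => ?_
  simp [div_eq_inv_mul]

theorem abs_intervalIntegral_sub_mul_le {C : ℝ} {g : ℝ → ℝ} (hf_nonneg : ∀ u v, 0 ≤ f u v)
    (hdom : ∀ u v, f u v ≤ C * |g v|) (y t v : ℝ) :
    |∫ u in (y - t * v)..y, f u v| ≤ C * |t| * |v * g v| := by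
  have := intervalIntegral.norm_integral_le_of_norm_le_const (a := y - t * v) (b := y)
    (f := (f · v)) fun u _ => (abs_of_nonneg (hf_nonneg u v)).trans_le (hdom u v)
  calc |∫ u in (y - t * v)..y, f u v| ≤ C * |g v| * |y - (y - t * v)| := this
    _ = C * |t| * |v * g v| := by rw [sub_sub_cancel, abs_mul, abs_mul]; ring

theorem setOf_mem_setOf_add_mul_le (y t v : ℝ) :
    {u | (u, v) ∈ {q : ℝ × ℝ | q.1 + t * q.2 ≤ y}} = Iic (y - t * v) := by
  ext u
  simp [le_sub_iff_add_le]

variable (hf : Integrable (fun p : ℝ × ℝ => f p.1 p.2))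
include hf

theorem integrable_setIntegral_Iic_sub_mul (y t : ℝ) :
    Integrable fun v => ∫ u in Iic (y - t * v), f u v := by
  rw [Measure.volume_eq_prod] at hf
  have hS : MeasurableSet {q : ℝ × ℝ | q.1 + t * q.2 ≤ y} :=
    measurableSet_le (by fun_prop) measurable_const
  simpa only [setOf_mem_setOf_add_mul_le] using integrable_setIntegral_slice hf hS

theorem setIntegral_Iic_sub_ae_eq_intervalIntegral (y t : ℝ) :
    (fun v => (∫ u in Iic y, f u v) - ∫ u in Iic (y - t * v), f u v)
      =ᵐ[volume] fun v => ∫ u in (y - t * v)..y, f u v := by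
  rw [Measure.volume_eq_prod] at hf
  filter_upwards [hf.prod_left_ae] with v hv
  exact intervalIntegral.integral_Iic_sub_Iic hv.integrableOn hv.integrableOn

theorem integrable_intervalIntegral_sub_mul (y t : ℝ) :
    Integrable fun v => ∫ u in (y - t * v)..y, f u v := by
  have h0 : Integrable fun v => ∫ u in Iic y, f u v := by
    simpa using integrable_setIntegral_Iic_sub_mul hf y 0
  exact (h0.sub (integrable_setIntegral_Iic_sub_mul hf y t)).congr
    (setIntegral_Iic_sub_ae_eq_intervalIntegral hf y t)

theorem setIntegral_sub_setIntegral_shear (y t : ℝ) :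
    (∫ p in {q : ℝ × ℝ | q.1 ≤ y}, f p.1 p.2) - ∫ p in {q : ℝ × ℝ | q.1 + t * q.2 ≤ y}, f p.1 p.2
      = ∫ v, ∫ u in (y - t * v)..y, f u v := by
  have h0 : Integrable fun v => ∫ u in Iic y, f u v := by
    simpa using integrable_setIntegral_Iic_sub_mul hf y 0
  have h1 := integrable_setIntegral_Iic_sub_mul hf y t
  have hae := setIntegral_Iic_sub_ae_eq_intervalIntegral hf y t
  rw [Measure.volume_eq_prod] at hf ⊢
  rw [setIntegral_prod_eq_integral_setIntegral_slice hf
      (measurableSet_le measurable_fst measurable_const),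
    setIntegral_prod_eq_integral_setIntegral_slice hf
      (measurableSet_le (by fun_prop) measurable_const)]
  simp only [setOf_mem_setOf_add_mul_le]
  exact (integral_sub h0 h1).symm.trans (integral_congr_ae hae)

variable {C : ℝ} {g : ℝ → ℝ} (hf_nonneg : ∀ u v, 0 ≤ f u v) (hdom : ∀ u v, f u v ≤ C * |g v|)
include hf_nonneg hdom

theorem tendsto_integral_intervalIntegral_sub_mul_div (hf_cont : ∀ v, Continuous (f · v))
    (hyg : Integrable fun v => |v * g v|) (y : ℝ) :
    Tendsto (fun t => ∫ v, (∫ u in (y - t * v)..y, f u v) / t) (𝓝[>] 0)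
      (𝓝 (∫ v, v * f y v)) := by
  refine tendsto_integral_filter_of_dominated_convergence (fun v => C * |v * g v|)
    (Eventually.of_forall fun t =>
      ((integrable_intervalIntegral_sub_mul hf y t).div_const t).aestronglyMeasurable)
    ?_ (hyg.const_mul C)
    (Eventually.of_forall fun v => tendsto_intervalIntegral_sub_mul_div (hf_cont v) y v)
  filter_upwards [self_mem_nhdsWithin] with t (ht : 0 < t)
  refine Eventually.of_forall fun v => ?_
  have hbound := abs_intervalIntegral_sub_mul_le hf_nonneg hdom y t v
  rw [abs_of_pos ht] at hbound
  rw [Real.norm_eq_abs, abs_div, abs_of_pos ht, div_le_iff₀ ht]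
  linarith

theorem tendsto_setIntegral_shear_sub_div (hf_cont : ∀ v, Continuous (f · v))
    (hyg : Integrable fun v => |v * g v|) (y : ℝ) :
    Tendsto (fun t => ((∫ p in {q : ℝ × ℝ | q.1 + t * q.2 ≤ y}, f p.1 p.2)
        - ∫ p in {q : ℝ × ℝ | q.1 ≤ y}, f p.1 p.2) / t) (𝓝[>] 0)
      (𝓝 (-∫ v, v * f y v)) := by
  refine (tendsto_integral_intervalIntegral_sub_mul_div hf hf_nonneg hdom hf_cont hyg y).neg.congr
    fun t => ?_
  rw [integral_div, ← setIntegral_sub_setIntegral_shear hf, ← neg_div, neg_sub]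

theorem setIntegral_strip_le (hg : Integrable g) (y t : ℝ) {r : ℝ} (hr : 0 ≤ r) :
    ∫ p in {q : ℝ × ℝ | |q.1 + t * q.2 - y| ≤ r}, f p.1 p.2 ≤ 2 * r * (C * ∫ v, |g v|) := by
  have hS : MeasurableSet {q : ℝ × ℝ | |q.1 + t * q.2 - y| ≤ r} :=
    measurableSet_le (by fun_prop) measurable_const
  rw [Measure.volume_eq_prod] at hf ⊢
  rw [setIntegral_prod_eq_integral_setIntegral_slice hf hS]
  calc _ ≤ ∫ v, 2 * r * (C * |g v|) :=
        integral_mono (integrable_setIntegral_slice hf hS) ((hg.abs.const_mul C).const_mul _)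
          fun v => ?_
    _ = 2 * r * (C * ∫ v, |g v|) := by rw [integral_const_mul, integral_const_mul]
  have hslice : {u | (u, v) ∈ {q : ℝ × ℝ | |q.1 + t * q.2 - y| ≤ r}}
      = Icc (y - t * v - r) (y - t * v + r) := by
    ext u
    simp only [mem_ofPred_eq, mem_Icc, abs_le]
    constructor <;> rintro ⟨h₁, h₂⟩ <;> constructor <;> linarith
  rw [hslice]
  calc _ ≤ ‖∫ u in Icc (y - t * v - r) (y - t * v + r), f u v‖ := Real.le_norm_self _
    _ ≤ C * |g v| * volume.real (Icc (y - t * v - r) (y - t * v + r)) :=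
        norm_setIntegral_le_of_norm_le_const measure_Icc_lt_top fun u _ =>
          (abs_of_nonneg (hf_nonneg u v)).trans_le (hdom u v)
    _ = 2 * r * (C * |g v|) := by rw [Real.volume_real_Icc_of_le (by linarith)]; ring

end Shear

section Perturbation

theorem le_iff_le_of_abs_sub_lt {a b y δ : ℝ} (hab : |a - b| < δ) (hby : δ < |b - y|) :
    a ≤ y ↔ b ≤ y := by
  rw [abs_lt] at hab
  rcases lt_abs.1 hby with h | h <;> constructor <;> intro <;> linarith

variable {Ω : Type*}

theorem setOf_le_symmDiff_subset (a b : Ω → ℝ) (y δ : ℝ) :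
    {ω | a ω ≤ y} ∆ {ω | b ω ≤ y} ⊆ {ω | δ ≤ |a ω - b ω|} ∪ {ω | |b ω - y| ≤ δ} := by
  intro ω hω
  by_contra hω'
  simp only [mem_union, mem_ofPred_eq, not_or, not_le] at hω'
  have hiff := le_iff_le_of_abs_sub_lt hω'.1 hω'.2
  simp only [mem_symmDiff, mem_ofPred_eq, hiff] at hω
  tauto

theorem abs_measureReal_setOf_le_sub_le [MeasurableSpace Ω] (μ : Measure Ω) [IsFiniteMeasure μ]
    {a b : Ω → ℝ} (ha : Measurable a) (hb : Measurable b) (y δ : ℝ) :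
    |μ.real {ω | a ω ≤ y} - μ.real {ω | b ω ≤ y}|
      ≤ μ.real {ω | δ ≤ |a ω - b ω|} + μ.real {ω | |b ω - y| ≤ δ} :=
  (abs_measureReal_sub_le_measureReal_symmDiff
    (measurableSet_le ha measurable_const).nullMeasurableSet
    (measurableSet_le hb measurable_const).nullMeasurableSet).trans
    ((measureReal_mono (setOf_le_symmDiff_subset a b y δ)).trans (measureReal_union_le _ _))

end Perturbation

theorem distributional_mpe_general
    {Ω : Type*} [MeasureSpace Ω] [IsProbabilityMeasure (ℙ : Measure Ω)]
    (Y M : Ω → ℝ) (Yt : ℝ → Ω → ℝ)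
    (hY : Measurable Y) (hM : Measurable M) (hYt : ∀ t, Measurable (Yt t))
    -- o(t) linear approximation of Y_t by Y + t·M
    (happrox : ∀ ν : ℝ, 0 < ν →
      Tendsto (fun t : ℝ =>
          (ℙ {ω | ν * t ≤ |Yt t ω - Y ω - t * M ω|}).toReal / t)
        (𝓝[>] (0:ℝ)) (𝓝 0))
    -- joint density of (Y, M)
    (f : ℝ → ℝ → ℝ)
    (hf_nonneg : ∀ y y', 0 ≤ f y y')
    (hf_density : ∀ A : Set (ℝ × ℝ), MeasurableSet A →
      (ℙ ((fun ω => (Y ω, M ω)) ⁻¹' A)).toReal = ∫ p in A, f p.1 p.2)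
    (hf_cont : ∀ y' : ℝ, Continuous (fun y => f y y'))
    (g : ℝ → ℝ) (C : ℝ)
    (hg_int : Integrable g)
    (hyg_int : Integrable (fun y' => |y' * g y'|))
    (hdom : ∀ y y' : ℝ, f y y' ≤ C * |g y'|)
    -- marginal density of Y
    (fY : ℝ → ℝ)
    (y : ℝ) (hfYpos : 0 < fY y) :
    Tendsto (fun t : ℝ =>
        ((ℙ {ω | Yt t ω ≤ y}).toReal - (ℙ {ω | Y ω ≤ y}).toReal) / t)
      (𝓝[>] (0:ℝ)) (𝓝 (-∫ y' : ℝ, y' * f y y')) ∧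
    (-∫ y' : ℝ, y' * f y y') = -(fY y) * ((∫ y' : ℝ, y' * f y y') / fY y) := by
  have hf_int : Integrable (fun p : ℝ × ℝ => f p.1 p.2) := by
    by_contra h
    simpa [integral_undef h] using hf_density univ MeasurableSet.univ
  have hshear : Tendsto (fun t : ℝ =>
      ((ℙ {ω | Y ω + t * M ω ≤ y}).toReal - (ℙ {ω | Y ω ≤ y}).toReal) / t)
      (𝓝[>] 0) (𝓝 (-∫ y', y' * f y y')) := by
    refine (tendsto_setIntegral_shear_sub_div hf_int hf_nonneg hdom hf_cont hyg_int y).congr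
      fun t => ?_
    rw [← hf_density _ (measurableSet_le (by fun_prop) measurable_const),
      ← hf_density _ (measurableSet_le measurable_fst measurable_const)]
    rfl
  have hnear : Tendsto (fun t : ℝ =>
      ((ℙ {ω | Yt t ω ≤ y}).toReal - (ℙ {ω | Y ω + t * M ω ≤ y}).toReal) / t)
      (𝓝[>] 0) (𝓝 0) := by
    refine tendsto_nhds_zero_of_forall_abs_le_add_mul (2 * (C * ∫ v, |g v|))
      fun ν hν => ⟨_, happrox ν hν, ?_⟩
    filter_upwards [self_mem_nhdsWithin] with t (ht : 0 < t)
    have hprob := abs_measureReal_setOf_le_sub_le ℙ (hYt t)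
      (b := fun ω => Y ω + t * M ω) (by fun_prop) y (ν * t)
    simp only [measureReal_def, ← sub_sub] at hprob
    have hstrip : (ℙ {ω | |Y ω + t * M ω - y| ≤ ν * t}).toReal ≤ 2 * (ν * t) * (C * ∫ v, |g v|) :=
      (hf_density _ (measurableSet_le (by fun_prop) measurable_const)).trans_le
        (setIntegral_strip_le hf_int hf_nonneg hdom hg_int y t (by positivity))
    rw [abs_div, abs_of_pos ht, div_le_iff₀ ht, add_mul, div_mul_cancel₀ _ ht.ne']
    linarith
  refine ⟨?_, by field_simp⟩
  have hsum := hnear.add hshear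
  rw [zero_add] at hsum
  exact hsum.congr fun t => by ring

/-- abstract distributional marginal policy effect (Theorem 1, first
part). If `ℙ[|Y_t − Y − t·M| ≥ ν t] = o(t)` as `t ↓ 0` for each `ν > 0`, the pair
`(Y, M)` has joint density `f` (w.r.t. Lebesgue measure on `ℝ²`) continuous in the
first argument and dominated by `C|g(y')|` with `∫ |y' g(y')| dy' < ∞`, and `Y`
has a continuously differentiable CDF with density `f_Y`, then for every `y`,
`lim_{t↓0} (ℙ[Y_t ≤ y] − ℙ[Y ≤ y])/t = −∫ y' f(y, y') dy'
  = −f_Y(y)·E[M | Y = y]`, where `E[M|Y=y] = (∫ y' f(y,y') dy') / f_Y(y)`. -/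
theorem distributional_mpe
    {Ω : Type*} [MeasureSpace Ω] [IsProbabilityMeasure (ℙ : Measure Ω)]
    (Y M : Ω → ℝ) (Yt : ℝ → Ω → ℝ)
    (hY : Measurable Y) (hM : Measurable M) (hYt : ∀ t, Measurable (Yt t))
    -- o(t) linear approximation of Y_t by Y + t·M
    (happrox : ∀ ν : ℝ, 0 < ν →
      Tendsto (fun t : ℝ =>
          (ℙ {ω | ν * t ≤ |Yt t ω - Y ω - t * M ω|}).toReal / t)
        (𝓝[>] (0:ℝ)) (𝓝 0))
    -- joint density of (Y, M)
    (f : ℝ → ℝ → ℝ)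
    (hf_nonneg : ∀ y y', 0 ≤ f y y')
    (hf_density : ∀ A : Set (ℝ × ℝ), MeasurableSet A →
      (ℙ ((fun ω => (Y ω, M ω)) ⁻¹' A)).toReal = ∫ p in A, f p.1 p.2)
    (hf_cont : ∀ y' : ℝ, Continuous (fun y => f y y'))
    (g : ℝ → ℝ) (C : ℝ) (hC : 0 < C)
    (hg_int : Integrable g)
    (hyg_int : Integrable (fun y' => |y' * g y'|))
    (hdom : ∀ y y' : ℝ, f y y' ≤ C * |g y'|)
    -- marginal density of Y
    (fY : ℝ → ℝ)
    (hfY : ∀ y : ℝ, fY y = ∫ y' : ℝ, f y y')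
    (hFY : ∀ y : ℝ, HasDerivAt (fun a => (ℙ {ω | Y ω ≤ a}).toReal) (fY y) y)
    (hfYcont : Continuous fY)
    (y : ℝ) (hfYpos : 0 < fY y) :
    Tendsto (fun t : ℝ =>
        ((ℙ {ω | Yt t ω ≤ y}).toReal - (ℙ {ω | Y ω ≤ y}).toReal) / t)
      (𝓝[>] (0:ℝ)) (𝓝 (-∫ y' : ℝ, y' * f y y')) ∧
    (-∫ y' : ℝ, y' * f y y') = -(fY y) * ((∫ y' : ℝ, y' * f y y') / fY y) :=
  distributional_mpe_general Y M Yt hY hM hYt happrox f hf_nonneg hf_density hf_cont g C hg_int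
    hyg_int hdom fY y hfYpos
end

section
/- Let D be a real random variable with continuous, strictly increasing CDF F_D and strictly positive density f_D on its support. Let G_D be another CDF and define H_t(d) = F_D(d) + t(G_D(d) − F_D(d)) for t ∈ [0,1], assumed continuous with generalized inverse H_t^{-1}. Define π_t(d) = H_t^{-1}(F_D(d)). Then π_0(d) = d and ∂_t π_t(d)|_{t=0} = −(G_D(d) − F_D(d))/f_D(d) for every d in the support of D. -/
open Filter Topology Set

/-- infinitesimal direction of a rank-preserving distributional
shift. With `H_t = F_D + t(G_D − F_D)` and `π_t(d) = H_t⁻¹(F_D(d))` (generalized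
inverse), one has `π_0(d) = d` and `∂_t π_t(d)|_{t=0} = −(G_D(d) − F_D(d))/f_D(d)`
(one-sided derivative at `t = 0`) for every `d` in the support of `D`. -/
theorem rank_preserving_shift_derivative
    (F G f : ℝ → ℝ) (S : Set ℝ)     -- S = support of D
    (hFcont : Continuous F) (hFmono : StrictMonoOn F S)
    (hFcdf : Monotone F) (hGcdf : Monotone G)
    (hf : ∀ d ∈ S, HasDerivAt F (f d) d)
    (hfpos : ∀ d ∈ S, 0 < f d)
    (H : ℝ → ℝ → ℝ)
    (hH : ∀ t d, H t d = F d + t * (G d - F d))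
    (hHcont : ∀ t ∈ Icc (0:ℝ) 1, Continuous (H t))
    (π : ℝ → ℝ → ℝ)
    (hπ : ∀ t d, π t d = sInf {a : ℝ | F d ≤ H t a})   -- π_t(d) = H_t⁻¹(F_D(d))
    (hsupp : ∀ t ∈ Icc (0:ℝ) 1, ∀ d ∈ S, π t d ∈ S)  -- supp(D^t) ⊆ supp(D)
    (d : ℝ) (hd : d ∈ S) :
    π 0 d = d ∧
      HasDerivWithinAt (fun t => π t d) (-(G d - F d) / f d) (Ici (0:ℝ)) 0 := by
  have hfd := hf d hd
  have hfdpos := hfpos d hd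
  -- G is continuous, since H 1 = G is continuous
  have hGc : Continuous G := by
    have h1 := hHcont 1 (by norm_num)
    have hG1 : H 1 = G := by funext a; rw [hH]; ring
    rwa [hG1] at h1
  -- strict separation of F at d
  have hlt : ∀ a, a < d → F a < F d := by
    intro a ha
    rcases lt_or_eq_of_le (hFcdf ha.le) with h | h
    · exact h
    · exfalso
      have hcc : ∀ y ∈ Icc a d, F y = F d := by
        intro y hy
        have h1 : F a ≤ F y := hFcdf hy.1
        have h2 : F y ≤ F d := hFcdf hy.2
        linarith
      have hu : UniqueDiffWithinAt ℝ (Icc a d) d :=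
        (uniqueDiffOn_Icc ha) d ⟨ha.le, le_refl d⟩
      have hW : HasDerivWithinAt F (f d) (Icc a d) d := hfd.hasDerivWithinAt
      have hC : HasDerivWithinAt F 0 (Icc a d) d :=
        (hasDerivWithinAt_const d (Icc a d) (F d)).congr
          (fun y hy => hcc y hy) (hcc d ⟨ha.le, le_rfl⟩)
      have e1 : derivWithin F (Icc a d) d = f d := hW.derivWithin hu
      have e2 : derivWithin F (Icc a d) d = 0 := hC.derivWithin hu
      rw [e1] at e2; linarith
  have hgt : ∀ a, d < a → F d < F a := by
    intro a ha
    rcases lt_or_eq_of_le (hFcdf ha.le) with h | h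
    · exact h
    · exfalso
      have hcc : ∀ y ∈ Icc d a, F y = F d := by
        intro y hy
        have h1 : F d ≤ F y := hFcdf hy.1
        have h2 : F y ≤ F a := hFcdf hy.2
        linarith
      have hu : UniqueDiffWithinAt ℝ (Icc d a) d :=
        (uniqueDiffOn_Icc ha) d ⟨le_refl d, ha.le⟩
      have hW : HasDerivWithinAt F (f d) (Icc d a) d := hfd.hasDerivWithinAt
      have hC : HasDerivWithinAt F 0 (Icc d a) d :=
        (hasDerivWithinAt_const d (Icc d a) (F d)).congr
          (fun y hy => hcc y hy) (hcc d ⟨le_rfl, ha.le⟩)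
      have e1 : derivWithin F (Icc d a) d = f d := hW.derivWithin hu
      have e2 : derivWithin F (Icc d a) d = 0 := hC.derivWithin hu
      rw [e1] at e2; linarith
  -- π 0 d = d
  have hπ0 : π 0 d = d := by
    rw [hπ]
    have hset : {a : ℝ | F d ≤ H 0 a} = Ici d := by
      ext a
      simp only [mem_setOf_eq, mem_Ici, hH, zero_mul, add_zero]
      constructor
      · intro h
        by_contra hh
        push_neg at hh
        linarith [hlt a hh]
      · intro h
        exact hFcdf h
    rw [hset, csInf_Ici]
  -- monotonicity of H t for t ∈ [0,1]
  have hHmono : ∀ t : ℝ, 0 ≤ t → t ≤ 1 → Monotone (H t) := by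
    intro t ht0 ht1 a b hab
    rw [hH, hH]
    have h1 : F a ≤ F b := hFcdf hab
    have h2 : G a ≤ G b := hGcdf hab
    nlinarith
  -- key localization lemma
  have key : ∀ ε : ℝ, 0 < ε → ∀ᶠ t in 𝓝[>] (0:ℝ),
      d - ε ≤ π t d ∧ π t d ≤ d + ε ∧ H t (π t d) = F d := by
    intro ε hε
    have hFl : F (d - ε) < F d := hlt _ (by linarith)
    have hFu : F d < F (d + ε) := hgt _ (by linarith)
    have tlo : Tendsto (fun t : ℝ => H t (d - ε)) (𝓝[>] (0:ℝ)) (𝓝 (F (d - ε))) := by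
      have hc : Continuous (fun t : ℝ => F (d - ε) + t * (G (d - ε) - F (d - ε))) := by
        continuity
      have h0 := (hc.tendsto 0).mono_left (nhdsWithin_le_nhds : 𝓝[>] (0:ℝ) ≤ 𝓝 0)
      simp only [zero_mul, add_zero] at h0
      exact h0.congr (fun t => (hH t (d - ε)).symm)
    have thi : Tendsto (fun t : ℝ => H t (d + ε)) (𝓝[>] (0:ℝ)) (𝓝 (F (d + ε))) := by
      have hc : Continuous (fun t : ℝ => F (d + ε) + t * (G (d + ε) - F (d + ε))) := by
        continuity
      have h0 := (hc.tendsto 0).mono_left (nhdsWithin_le_nhds : 𝓝[>] (0:ℝ) ≤ 𝓝 0)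
      simp only [zero_mul, add_zero] at h0
      exact h0.congr (fun t => (hH t (d + ε)).symm)
    have e1 : ∀ᶠ t in 𝓝[>] (0:ℝ), H t (d - ε) < F d := tlo.eventually_lt_const hFl
    have e2 : ∀ᶠ t in 𝓝[>] (0:ℝ), F d < H t (d + ε) := thi.eventually_const_lt hFu
    have e3 : ∀ᶠ t in 𝓝[>] (0:ℝ), t ∈ Ioo (0:ℝ) 1 := by
      have : Ioo (0:ℝ) 1 ∈ 𝓝[>] (0:ℝ) := Ioo_mem_nhdsGT_of_mem ⟨le_rfl, one_pos⟩
      exact eventually_of_mem this (fun _ h => h)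
    filter_upwards [e1, e2, e3] with t hlo hhi htm
    have ht01 : t ∈ Icc (0:ℝ) 1 := ⟨htm.1.le, htm.2.le⟩
    have hmono := hHmono t htm.1.le htm.2.le
    have hcl : IsClosed {a : ℝ | F d ≤ H t a} :=
      isClosed_le continuous_const (hHcont t ht01)
    have hne : (d + ε) ∈ {a : ℝ | F d ≤ H t a} := le_of_lt hhi
    have hbdd : BddBelow {a : ℝ | F d ≤ H t a} := by
      refine ⟨d - ε, fun a ha => ?_⟩
      by_contra hcon
      push_neg at hcon
      have : H t a ≤ H t (d - ε) := hmono hcon.le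
      exact absurd (le_trans ha this) (not_le.2 hlo)
    have hnonempty : {a : ℝ | F d ≤ H t a}.Nonempty := ⟨_, hne⟩
    have hmem : sInf {a : ℝ | F d ≤ H t a} ∈ {a : ℝ | F d ≤ H t a} :=
      hcl.csInf_mem hnonempty hbdd
    have hxlo : d - ε ≤ sInf {a : ℝ | F d ≤ H t a} := by
      refine le_csInf hnonempty (fun a ha => ?_)
      by_contra hcon
      push_neg at hcon
      have : H t a ≤ H t (d - ε) := hmono hcon.le
      exact absurd (le_trans ha this) (not_le.2 hlo)
    have hxhi : sInf {a : ℝ | F d ≤ H t a} ≤ d + ε := csInf_le hbdd hne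
    have heqt : H t (sInf {a : ℝ | F d ≤ H t a}) = F d := by
      refine le_antisymm ?_ hmem
      by_contra hcgt
      push_neg at hcgt
      have hop : IsOpen {a : ℝ | F d < H t a} :=
        isOpen_lt continuous_const (hHcont t ht01)
      obtain ⟨η, hη, hball⟩ := Metric.isOpen_iff.1 hop _ hcgt
      have hmemball : sInf {a : ℝ | F d ≤ H t a} - η / 2 ∈
          Metric.ball (sInf {a : ℝ | F d ≤ H t a}) η := by
        rw [Metric.mem_ball, Real.dist_eq]
        rw [show sInf {a : ℝ | F d ≤ H t a} - η / 2 - sInf {a : ℝ | F d ≤ H t a}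
            = -(η / 2) by ring]
        rw [abs_neg, abs_of_nonneg (by linarith)]
        linarith
      have hlt' : F d < H t (sInf {a : ℝ | F d ≤ H t a} - η / 2) := hball hmemball
      have hin : sInf {a : ℝ | F d ≤ H t a} - η / 2 ∈ {a : ℝ | F d ≤ H t a} :=
        le_of_lt hlt'
      have := csInf_le hbdd hin
      linarith
    rw [hπ]
    exact ⟨hxlo, hxhi, heqt⟩
  -- π t d → d as t → 0+
  have hx : Tendsto (fun t => π t d) (𝓝[>] (0:ℝ)) (𝓝 d) := by
    rw [Metric.tendsto_nhds]
    intro ε hε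
    filter_upwards [key (ε / 2) (by linarith)] with t ht
    obtain ⟨h1, h2, _⟩ := ht
    rw [Real.dist_eq, abs_lt]
    constructor <;> linarith
  -- the auxiliary slope function
  set r : ℝ → ℝ := fun x => if x = d then f d else (F x - F d) / (x - d) with hr
  have hrt : Tendsto r (𝓝 d) (𝓝 (f d)) := by
    rw [← nhdsNE_sup_pure d, tendsto_sup]
    constructor
    · have hs := hasDerivAt_iff_tendsto_slope.1 hfd
      refine hs.congr' ?_
      filter_upwards [self_mem_nhdsWithin] with x hxx
      have hxd : x ≠ d := hxx
      simp [hr, slope_def_field, if_neg hxd]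
    · have h0 := tendsto_pure_nhds r d
      simpa [hr] using h0
  have hg : Tendsto (fun x => -(G x - F x) / r x) (𝓝 d) (𝓝 (-(G d - F d) / f d)) := by
    have h1 : Tendsto (fun x => -(G x - F x)) (𝓝 d) (𝓝 (-(G d - F d))) :=
      ((hGc.sub hFcont).neg.tendsto d)
    exact h1.div hrt (ne_of_gt hfdpos)
  have hcomp : Tendsto (fun t => -(G (π t d) - F (π t d)) / r (π t d)) (𝓝[>] (0:ℝ))
      (𝓝 (-(G d - F d) / f d)) := hg.comp hx
  -- eventual equality of the slopes
  have heq2 : ∀ᶠ t in 𝓝[>] (0:ℝ),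
      (π t d - d) / t = -(G (π t d) - F (π t d)) / r (π t d) := by
    filter_upwards [key 1 one_pos, self_mem_nhdsWithin] with t ht htpos
    obtain ⟨_, _, hHt⟩ := ht
    have ht0 : (0:ℝ) < t := htpos
    have hHx : F (π t d) + t * (G (π t d) - F (π t d)) = F d := by
      rw [← hH]; exact hHt
    by_cases hxd : π t d = d
    · rw [hxd] at hHx ⊢
      have hz : G d - F d = 0 := by
        have hmul : t * (G d - F d) = 0 := by linarith
        rcases mul_eq_zero.1 hmul with h | h
        · exact absurd h (ne_of_gt ht0)
        · exact h
      simp [hr, hz]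
    · have hFx : F (π t d) - F d ≠ 0 := by
        rcases lt_or_gt_of_ne hxd with h | h
        · exact ne_of_lt (by linarith [hlt _ h])
        · exact ne_of_gt (by linarith [hgt _ h])
      have hGF : G (π t d) - F (π t d) ≠ 0 := by
        intro h0
        apply hFx
        rw [h0, mul_zero, add_zero] at hHx
        linarith
      have hx_d : π t d - d ≠ 0 := sub_ne_zero.2 hxd
      have hkey : F (π t d) - F d = -(t * (G (π t d) - F (π t d))) := by linarith
      rw [hr]
      simp only [if_neg hxd]
      rw [div_div_eq_mul_div]
      rw [hkey]
      field_simp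
  have hslope : Tendsto (fun t => (π t d - d) / t) (𝓝[>] (0:ℝ))
      (𝓝 (-(G d - F d) / f d)) := by
    refine hcomp.congr' ?_
    filter_upwards [heq2] with t h
    exact h.symm
  refine ⟨hπ0, ?_⟩
  rw [hasDerivWithinAt_iff_tendsto_slope]
  have hIci : Ici (0:ℝ) \ {0} = Ioi 0 := Ici_sdiff_left
  rw [hIci]
  refine hslope.congr (fun t => ?_)
  simp [slope_def_field, hπ0]
end

section
/- Let D be continuously distributed with density f_D > 0 and let (D, X) have joint density f_{D,X}. Let H_t(d) = F_D(d) + t(G_D(d) − F_D(d)) and D^t = H_t^{-1}(F_D(D)). If C is the copula of (D^t, X), so that C(H_t(d), F_X(x)) = F_{D^t,X}(d, x), then ∂_t C(H_t(d), F_X(x))|_{t=0} = F_{X|D}(x|d)·(G_D(d) − F_D(d)). -/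
/-!
At `t = 0` the perturbed variable `D⁰ = F_D⁻¹(F_D(D))` is `D` itself, so Sklar's identity reads
`C(F_D(w), F_X(x)) = F_{D,X}(w, x)` for every `w`. As `F_D` is continuous and strictly increasing,
its range is a neighbourhood of `F_D(d)`, on which `u ↦ C(u, F_X(x))` is therefore
`u ↦ F_{D,X}(F_D⁻¹(u), x)`; by the inverse function rule its derivative at `F_D(d)` is
`F_{X|D}(x|d) f_D(d) / f_D(d)`. The chain rule along `t ↦ H_t(d)` finishes the proof.
-/

open Filter Topology Set MeasureTheory ProbabilityTheory Function

theorem StrictMono.leftInverse_csInf_setOf_le {α β : Type*} [ConditionallyCompleteLinearOrder α]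
    [Preorder β] {F : α → β} (hm : StrictMono F) : LeftInverse (fun u => sInf {a | u ≤ F a}) F := by
  intro w
  simp only [hm.le_iff_le]
  exact csInf_Ici

section StrictMono

variable {α β : Type*} [ConditionallyCompleteLinearOrder α] [TopologicalSpace α] [OrderTopology α]
  [DenselyOrdered α] [NoMinOrder α] [NoMaxOrder α]
  [LinearOrder β] [TopologicalSpace β] [OrderTopology β] {F : α → β}

theorem Continuous.range_mem_nhds_of_strictMono (hc : Continuous F) (hm : StrictMono F) (a : α) :
    range F ∈ 𝓝 (F a) := by
  obtain ⟨l, hl⟩ := exists_lt a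
  obtain ⟨u, hu⟩ := exists_gt a
  refine mem_of_superset (Ioo_mem_nhds (hm hl) (hm hu)) ?_
  rw [← hc.image_Ioo_of_strictMono hm]
  exact image_subset_range F _

theorem Continuous.continuousAt_leftInverse_of_strictMono (hc : Continuous F) (hm : StrictMono F)
    {g : β → α} (hg : LeftInverse g F) (a : α) : ContinuousAt g (F a) := by
  have hgm : StrictMonoOn g (range F) := by
    rintro _ ⟨u, rfl⟩ _ ⟨v, rfl⟩ huv
    rwa [hg, hg, ← hm.lt_iff_lt]
  refine hgm.continuousAt_of_image_mem_nhds (hc.range_mem_nhds_of_strictMono hm a) ?_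
  rw [← range_comp, hg.comp_eq_id, range_id]
  exact univ_mem

end StrictMono

theorem HasDerivAt.of_comp_strictMono {F Φ K : ℝ → ℝ} {f' k' a : ℝ} (hc : Continuous F)
    (hm : StrictMono F) (hΦ : ∀ w, Φ (F w) = K w) (hF : HasDerivAt F f' a) (hf' : f' ≠ 0)
    (hK : HasDerivAt K k' a) : HasDerivAt Φ (k' / f') (F a) := by
  set g := invFun F
  have hg : LeftInverse g F := leftInverse_invFun hm.injective
  have hrange := hc.range_mem_nhds_of_strictMono hm a
  have hgF : HasDerivAt g f'⁻¹ (F a) := by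
    refine (hg a ▸ hF).of_local_left_inverse (hc.continuousAt_leftInverse_of_strictMono hm hg a)
      hf' (mem_of_superset hrange ?_)
    rintro _ ⟨w, rfl⟩
    exact congrArg F (hg w)
  have hKg : HasDerivAt (K ∘ g) (k' * f'⁻¹) (F a) := (hg a ▸ hK).comp (F a) hgF
  refine hKg.congr_of_eventuallyEq (mem_of_superset hrange ?_)
  rintro _ ⟨w, rfl⟩
  simp only [mem_ofPred_eq, comp_apply, hΦ, hg w]

theorem copula_derivative_marginal_perturbation_general
    {Ω : Type*} [MeasureSpace Ω]
    (D X : Ω → ℝ)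
    (F G f FX : ℝ → ℝ) (FXgD : ℝ → ℝ → ℝ)  -- F_D, G_D, f_D, F_X, F_{X|D}(x|d)
    (hFcont : Continuous F) (hFmono : StrictMono F)
    (hf : ∀ d, HasDerivAt F (f d) d) (hfpos : ∀ d, 0 < f d)
    -- the conditional CDF of X given D, via ∂_d F_{D,X}(d,x) = F_{X|D}(x|d) f_D(d)
    (hFXgD : ∀ d x, HasDerivAt (fun a => (ℙ {ω | D ω ≤ a ∧ X ω ≤ x}).toReal)
        (FXgD x d * f d) d)
    (H : ℝ → ℝ → ℝ)
    (hH : ∀ t d, H t d = F d + t * (G d - F d))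
    (Hinv : ℝ → ℝ → ℝ)
    (hHinv : ∀ t u, Hinv t u = sInf {a : ℝ | u ≤ H t a})
    -- Sklar: C is the copula of (D^t, X)
    (C : ℝ → ℝ → ℝ)
    (hC : ∀ t ∈ Icc (0:ℝ) 1, ∀ d x,
      C (H t d) (FX x) = (ℙ {ω | Hinv t (F (D ω)) ≤ d ∧ X ω ≤ x}).toReal)
    (d x : ℝ) :
    HasDerivWithinAt (fun t => C (H t d) (FX x))
      (FXgD x d * (G d - F d)) (Ici (0:ℝ)) 0 := by
  have hH0 : H 0 = F := funext fun a => by simp [hH]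
  have hHinv0 : LeftInverse (Hinv 0) F := by
    intro w
    rw [hHinv, hH0]
    exact hFmono.leftInverse_csInf_setOf_le w
  have hCF : ∀ w, C (F w) (FX x) = (ℙ {ω | D ω ≤ w ∧ X ω ≤ x}).toReal := fun w => by
    simpa only [hH0, hHinv0 _] using hC 0 (left_mem_Icc.2 zero_le_one) w x
  have hCy : HasDerivAt (fun y => C y (FX x)) (FXgD x d) (F d) := by
    have := HasDerivAt.of_comp_strictMono (Φ := (C · (FX x))) hFcont hFmono hCF (hf d)
      (hfpos d).ne' (hFXgD d x)
    rwa [mul_div_cancel_right₀ _ (hfpos d).ne'] at this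
  have hHd : HasDerivAt (fun t => H t d) (G d - F d) 0 := by
    simpa [hH] using ((hasDerivAt_id (0 : ℝ)).mul_const (G d - F d)).const_add (F d)
  rw [← congrFun hH0 d] at hCy
  exact (hCy.comp 0 hHd).hasDerivWithinAt

/-- derivative of the copula of `(D^t, X)` under the marginal
perturbation `H_t = F_D + t(G_D − F_D)`, `D^t = H_t⁻¹(F_D(D))`. If `C` is the
copula of `(D^t, X)` with `C(H_t(d), F_X(x)) = F_{D^t,X}(d, x)`, then
`∂_t C(H_t(d), F_X(x))|_{t=0} = F_{X|D}(x|d)·(G_D(d) − F_D(d))`. -/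
theorem copula_derivative_marginal_perturbation
    {Ω : Type*} [MeasureSpace Ω] [IsProbabilityMeasure (ℙ : Measure Ω)]
    (D X : Ω → ℝ) (hD : Measurable D) (hX : Measurable X)
    (F G f FX : ℝ → ℝ) (FXgD : ℝ → ℝ → ℝ)  -- F_D, G_D, f_D, F_X, F_{X|D}(x|d)
    (hF : ∀ d, F d = (ℙ {ω | D ω ≤ d}).toReal)
    (hFX : ∀ x, FX x = (ℙ {ω | X ω ≤ x}).toReal)
    (hGcdf : Monotone G)
    (hFcont : Continuous F) (hFmono : StrictMono F)
    (hf : ∀ d, HasDerivAt F (f d) d) (hfpos : ∀ d, 0 < f d)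
    -- the conditional CDF of X given D, via ∂_d F_{D,X}(d,x) = F_{X|D}(x|d) f_D(d)
    (hFXgD : ∀ d x, HasDerivAt (fun a => (ℙ {ω | D ω ≤ a ∧ X ω ≤ x}).toReal)
        (FXgD x d * f d) d)
    (H : ℝ → ℝ → ℝ)
    (hH : ∀ t d, H t d = F d + t * (G d - F d))
    (Hinv : ℝ → ℝ → ℝ)
    (hHinv : ∀ t u, Hinv t u = sInf {a : ℝ | u ≤ H t a})
    -- Sklar: C is the copula of (D^t, X)
    (C : ℝ → ℝ → ℝ)
    (hC : ∀ t ∈ Icc (0:ℝ) 1, ∀ d x,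
      C (H t d) (FX x) = (ℙ {ω | Hinv t (F (D ω)) ≤ d ∧ X ω ≤ x}).toReal)
    (d x : ℝ) :
    HasDerivWithinAt (fun t => C (H t d) (FX x))
      (FXgD x d * (G d - F d)) (Ici (0:ℝ)) 0 :=
  copula_derivative_marginal_perturbation_general D X F G f FX FXgD hFcont hFmono hf hfpos hFXgD H
    hH Hinv hHinv C hC d x
end

section
/- Let Y have a continuously differentiable CDF F_Y with density f_Y > 0 on its support. Suppose for each (d,x), ∂_d F_{Y|D,X}(y|d,x) exists and satisfies −∂_d F_{Y|D,X}(q|d,x) = f_{Y|D,X}(q|d,x)·E[∂_d m(d,x,ε)|D=d,X=x,Y=q] − E[1{m(d,x,ε) ≤ q}·∂_d ln f_{ε|D,X}(ε|d,x) | D=d,X=x]. Then integrating over the joint law of (D,X) at q = q_τ := Q_Y(τ) yields −E[∂_d F_{Y|D,X}(q_τ|D,X)]/f_Y(q_τ) = E[∂_d m(D,X,ε)|Y=q_τ] − E[1{Y ≤ q_τ}·∂_d ln f_{ε|D,X}(ε|D,X)]/f_Y(q_τ). -/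
open MeasureTheory

/-- structural decomposition of the UQR estimand, Theorem 2:
given the pointwise decomposition
`−∂_d F_{Y|D,X}(q_τ|d,x) = f_{Y|D,X}(q_τ|d,x)·E[∂_d m|D=d,X=x,Y=q_τ]
  − E[1{m ≤ q_τ}·∂_d ln f_{ε|D,X}|D=d,X=x]`,
integrating over the joint law of `(D,X)` (with density `fDX`) and using Bayes'
rule `f_{D,X|Y}(d,x|q_τ)·f_Y(q_τ) = f_{Y|D,X}(q_τ|d,x)·f_{D,X}(d,x)` yields
`−E[∂_d F_{Y|D,X}(q_τ|D,X)]/f_Y(q_τ)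
  = E[∂_d m|Y=q_τ] − E[1{Y≤q_τ}·∂_d ln f_{ε|D,X}(ε|D,X)]/f_Y(q_τ)`. -/
theorem uqr_structural_decomposition
    (fYq : ℝ) (hfYq : 0 < fYq)              -- f_Y(q_τ)
    (pdF fYdx condm corr fDX fDXgY : ℝ → ℝ → ℝ)
    -- fDX : joint density of (D,X); fDXgY : density of (D,X) given Y = q_τ
    (hfDX_nonneg : ∀ d x, 0 ≤ fDX d x)
    (hfYdx_pos : ∀ d x, 0 < fYdx d x)
    -- pointwise structural decomposition (Hoderlein–Mammen)
    (hdecomp : ∀ d x, -pdF d x = fYdx d x * condm d x - corr d x)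
    -- Bayes rule for densities
    (hBayes : ∀ d x, fDXgY d x * fYq = fYdx d x * fDX d x)
    (hint1 : Integrable (fun p : ℝ × ℝ => pdF p.1 p.2 * fDX p.1 p.2))
    (hint2 : Integrable (fun p : ℝ × ℝ => condm p.1 p.2 * fDXgY p.1 p.2))
    (hint3 : Integrable (fun p : ℝ × ℝ => corr p.1 p.2 * fDX p.1 p.2)) :
    -(∫ p : ℝ × ℝ, pdF p.1 p.2 * fDX p.1 p.2) / fYq
      = (∫ p : ℝ × ℝ, condm p.1 p.2 * fDXgY p.1 p.2)
        - (∫ p : ℝ × ℝ, corr p.1 p.2 * fDX p.1 p.2) / fYq := by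
  have key : ∀ p : ℝ × ℝ, -(pdF p.1 p.2 * fDX p.1 p.2)
      = fYq * (condm p.1 p.2 * fDXgY p.1 p.2) - corr p.1 p.2 * fDX p.1 p.2 := by
    intro p
    have h1 := hdecomp p.1 p.2
    have h2 := hBayes p.1 p.2
    linear_combination fDX p.1 p.2 * h1 - condm p.1 p.2 * h2
  have hI : -(∫ p : ℝ × ℝ, pdF p.1 p.2 * fDX p.1 p.2)
      = fYq * (∫ p : ℝ × ℝ, condm p.1 p.2 * fDXgY p.1 p.2)
        - (∫ p : ℝ × ℝ, corr p.1 p.2 * fDX p.1 p.2) := by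
    calc -(∫ p : ℝ × ℝ, pdF p.1 p.2 * fDX p.1 p.2)
        = ∫ p : ℝ × ℝ, -(pdF p.1 p.2 * fDX p.1 p.2) := (integral_neg _).symm
      _ = ∫ p : ℝ × ℝ, (fYq * (condm p.1 p.2 * fDXgY p.1 p.2)
            - corr p.1 p.2 * fDX p.1 p.2) := by simp_rw [key]
      _ = (∫ p : ℝ × ℝ, fYq * (condm p.1 p.2 * fDXgY p.1 p.2))
            - ∫ p : ℝ × ℝ, corr p.1 p.2 * fDX p.1 p.2 :=
          integral_sub (hint2.const_mul fYq) hint3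
      _ = fYq * (∫ p : ℝ × ℝ, condm p.1 p.2 * fDXgY p.1 p.2)
            - ∫ p : ℝ × ℝ, corr p.1 p.2 * fDX p.1 p.2 := by
          rw [integral_const_mul]
  rw [hI]
  field_simp
end
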